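/- Let r ∈ [1,2], let (ℱ_k)_{k∈ℤ} be an increasing family of sub-σ-algebras of 𝒜, and let n ∈ ℕ. For t = 1,…,n let Z_t be ℱ_t-measurable real random variables with E|Z_t|^r < ∞ and E[Z_t] = 0, and suppose that for each t, E[Z_t | ℱ_ℓ] → 0 almost surely and in L^r(P) as ℓ → −∞. Then E|∑_{t=1}^n Z_t|^r ≤ 2 ∑_{k∈ℤ, k≤n} ( ∑_{t=max(k,1)}^n ‖P_k Z_t‖_{L^r(P)} )^r, where the sum over k is allowed to be infinite. -/

import Mathlib

/-!
Put `S = ∑ₜ Z t` and `M k = E[S | ℱ k]`, so that `S - M m = ∑_{m < k ≤ n} P_k S` is a sum of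
martingale differences. For `1 ≤ r ≤ 2` the elementary inequality
`|x + y| ^ r ≤ |x| ^ r + r |x| ^ (r - 2) x y + 2 |y| ^ r`, integrated against an increment `y` that
is orthogonal to the past, gives the von Bahr–Esseen bound `E|S - M m| ^ r ≤ 2 ∑ₖ E|P_k S| ^ r`.
Since `Z t` is `ℱ (k - 1)`-measurable for `t < k`, `P_k S = ∑_{t ≥ k} P_k (Z t)`, and Minkowski's
inequality bounds `‖P_k S‖_r` by the inner sum. Letting `m → -∞` removes `M m`.
-/

open MeasureTheory Filter
open scoped ENNReal Topology

section Scalar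

variable {r : ℝ}

theorem abs_one_add_rpow_le (hr1 : 1 ≤ r) (hr2 : r ≤ 2) (s : ℝ) :
    |1 + s| ^ r ≤ 1 + r * s + 2 * |s| ^ r := by
  have hsr : 0 ≤ |s| ^ r := by positivity
  rcases lt_or_ge s (-1) with hs | hs
  · have hs' : |s| = -s := abs_of_neg (by linarith)
    have hbern := one_add_mul_self_le_rpow_one_add (s := |s| - 1) (by linarith) hr1
    rw [add_sub_cancel, hs', show r * (-s - 1) = -(r * s) - r by ring] at hbern
    have hmono : |1 + s| ^ r ≤ |s| ^ r :=
      Real.rpow_le_rpow (abs_nonneg _)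
        (by rw [hs', abs_of_neg (by linarith)]; linarith) (by linarith)
    rw [hs'] at hmono ⊢
    linarith
  have hpow : (1 + s) ^ r = (1 + s) ^ (r - 1) * (1 + s) := by
    rw [← Real.rpow_add_one' (by linarith) (by linarith), sub_add_cancel]
  rw [abs_of_nonneg (by linarith), hpow]
  rcases le_total s 1 with hs1 | hs1
  · have hbern := rpow_one_add_le_one_add_mul_self hs (p := r - 1) (by linarith) (by linarith)
    have hsq : s ^ 2 ≤ |s| ^ r := by
      rw [← sq_abs, ← Real.rpow_natCast]
      exact Real.rpow_le_rpow_of_exponent_ge' (abs_nonneg s) (abs_le.mpr ⟨hs, hs1⟩)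
        (by linarith) (by norm_num; linarith)
    nlinarith [mul_le_mul_of_nonneg_right hbern (by linarith : (0 : ℝ) ≤ 1 + s), sq_nonneg s]
  · have hsub := Real.rpow_add_le_add_rpow zero_le_one (by linarith : (0 : ℝ) ≤ s)
      (p := r - 1) (by linarith) (by linarith)
    have hsr' : s ^ (r - 1) * s = s ^ r := by
      rw [← Real.rpow_add_one' (by linarith) (by linarith), sub_add_cancel]
    have hle : s ^ (r - 1) ≤ s ^ r := Real.rpow_le_rpow_of_exponent_le hs1 (by linarith)
    rw [Real.one_rpow] at hsub
    rw [abs_of_nonneg (by linarith)]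
    nlinarith [mul_le_mul_of_nonneg_right hsub (by linarith : (0 : ℝ) ≤ 1 + s)]

theorem abs_add_rpow_le (hr1 : 1 ≤ r) (hr2 : r ≤ 2) (x y : ℝ) :
    |x + y| ^ r ≤ |x| ^ r + r * (|x| ^ (r - 2) * x * y) + 2 * |y| ^ r := by
  rcases eq_or_ne x 0 with rfl | hx
  · simp [Real.zero_rpow (by linarith : r ≠ 0)]
    linarith [show 0 ≤ |y| ^ r by positivity]
  have hx' : 0 < |x| := abs_pos.mpr hx
  have hxr : |x| ^ r = |x| ^ (r - 2) * x ^ 2 := by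
    rw [← sq_abs, ← Real.rpow_natCast, ← Real.rpow_add hx']
    norm_num
  calc |x + y| ^ r = |x| ^ r * |1 + y / x| ^ r := by
        rw [← Real.mul_rpow (abs_nonneg _) (abs_nonneg _), ← abs_mul, mul_add, mul_one,
          mul_div_cancel₀ y hx]
    _ ≤ |x| ^ r * (1 + r * (y / x) + 2 * |y / x| ^ r) := by
        gcongr
        exact abs_one_add_rpow_le hr1 hr2 (y / x)
    _ = |x| ^ r + r * (|x| ^ r * (y / x)) + 2 * (|x| ^ r * |y / x| ^ r) := by ring
    _ = |x| ^ r + r * (|x| ^ (r - 2) * x * y) + 2 * |y| ^ r := by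
        rw [← Real.mul_rpow (abs_nonneg _) (abs_nonneg _), ← abs_mul, mul_div_cancel₀ y hx, hxr]
        field_simp

theorem abs_rpow_sub_two_mul_mul_le (hr1 : 1 ≤ r) (x y : ℝ) :
    |(|x| ^ (r - 2) * x) * y| ≤ |x| ^ r + |y| ^ r := by
  rcases eq_or_ne x 0 with rfl | hx
  · simp only [mul_zero, zero_mul, abs_zero]
    positivity
  have hx' : |x| ≠ 0 := abs_ne_zero.mpr hx
  have hmul : ∀ {a : ℝ}, a ≠ 0 → a ^ (r - 1) * a = a ^ r := fun ha => by
    rw [← Real.rpow_add_one ha, sub_add_cancel]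
  have hform : |(|x| ^ (r - 2) * x) * y| = |x| ^ (r - 1) * |y| := by
    rw [abs_mul, abs_mul, abs_of_nonneg (by positivity), ← Real.rpow_add_one hx',
      show r - 2 + 1 = r - 1 by ring]
  rw [hform]
  rcases le_total |y| |x| with hyx | hxy
  · calc |x| ^ (r - 1) * |y| ≤ |x| ^ (r - 1) * |x| := by gcongr
      _ = |x| ^ r := hmul hx'
      _ ≤ |x| ^ r + |y| ^ r := le_add_of_nonneg_right (by positivity)
  · calc |x| ^ (r - 1) * |y| ≤ |y| ^ (r - 1) * |y| := by gcongr
      _ = |y| ^ r := hmul ((abs_pos.mpr hx).trans_le hxy).ne'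
      _ ≤ |x| ^ r + |y| ^ r := le_add_of_nonneg_left (by positivity)

end Scalar

namespace MeasureTheory

variable {Ω : Type*} {m m0 : MeasurableSpace Ω} {μ : Measure Ω} {r : ℝ}

theorem lintegral_nnnorm_rpow_eq_eLpNorm_rpow (hr : 0 < r) (f : Ω → ℝ) :
    ∫⁻ ω, (‖f ω‖₊ : ℝ≥0∞) ^ r ∂μ = eLpNorm f (ENNReal.ofReal r) μ ^ r := by
  rw [eLpNorm_eq_eLpNorm' (by simpa using hr) ENNReal.ofReal_ne_top, ENNReal.toReal_ofReal hr.le,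
    ← lintegral_rpow_enorm_eq_rpow_eLpNorm' hr]
  rfl

theorem MemLp.eLpNorm_rpow_eq_integral (hr : 0 < r) {f : Ω → ℝ}
    (hf : MemLp f (ENNReal.ofReal r) μ) :
    eLpNorm f (ENNReal.ofReal r) μ ^ r = ENNReal.ofReal (∫ ω, |f ω| ^ r ∂μ) := by
  rw [hf.eLpNorm_eq_integral_rpow_norm (by simpa using hr) ENNReal.ofReal_ne_top,
    ENNReal.toReal_ofReal hr.le, ENNReal.ofReal_rpow_of_nonneg (by positivity) hr.le,
    Real.rpow_inv_rpow (integral_nonneg fun _ => by positivity) hr.ne']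
  rfl

theorem MemLp.integrable_abs_rpow (hr : 0 < r) {f : Ω → ℝ} (hf : MemLp f (ENNReal.ofReal r) μ) :
    Integrable (fun ω => |f ω| ^ r) μ := by
  simpa [ENNReal.toReal_ofReal hr.le] using
    hf.integrable_norm_rpow (by simpa using hr) ENNReal.ofReal_ne_top

theorem integral_mul_eq_zero_of_condExp_eq_zero (hm : m ≤ m0) [SigmaFinite (μ.trim hm)]
    {f g : Ω → ℝ} (hg : StronglyMeasurable[m] g) (hgf : Integrable (g * f) μ)
    (hf : Integrable f μ) (hf0 : μ[f|m] =ᵐ[μ] 0) :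
    ∫ ω, g ω * f ω ∂μ = 0 := by
  have hgf0 : μ[g * f|m] =ᵐ[μ] 0 := by
    filter_upwards [condExp_mul_of_stronglyMeasurable_left hg hgf hf, hf0] with ω h h0
    simp [h, h0]
  change ∫ ω, (g * f) ω ∂μ = 0
  rw [← integral_condExp hm, integral_congr_ae hgf0]
  simp

theorem eLpNorm_add_rpow_le_of_condExp_eq_zero [IsFiniteMeasure μ] (hr1 : 1 ≤ r) (hr2 : r ≤ 2)
    (hm : m ≤ m0) {X Y : Ω → ℝ} (hX : StronglyMeasurable[m] X)
    (hXp : MemLp X (ENNReal.ofReal r) μ) (hYp : MemLp Y (ENNReal.ofReal r) μ)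
    (hY : μ[Y|m] =ᵐ[μ] 0) :
    eLpNorm (X + Y) (ENNReal.ofReal r) μ ^ r ≤
      eLpNorm X (ENNReal.ofReal r) μ ^ r + 2 * eLpNorm Y (ENNReal.ofReal r) μ ^ r := by
  have hr0 : 0 < r := by linarith
  -- `r * ψ` is the derivative of `|·| ^ r` at `X`; its pairing with `Y` vanishes by orthogonality
  set ψ : Ω → ℝ := fun ω => |X ω| ^ (r - 2) * X ω
  have hψ : StronglyMeasurable[m] ψ :=
    (((measurable_id.abs.pow_const (r - 2)).mul measurable_id).comp
      hX.measurable).stronglyMeasurable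
  have hψY : Integrable (fun ω => ψ ω * Y ω) μ :=
    ((hXp.integrable_abs_rpow hr0).add (hYp.integrable_abs_rpow hr0)).mono'
      ((hψ.mono hm).aestronglyMeasurable.mul hYp.aestronglyMeasurable)
      (ae_of_all _ fun ω => abs_rpow_sub_two_mul_mul_le hr1 (X ω) (Y ω))
  have horth : ∫ ω, ψ ω * Y ω ∂μ = 0 := integral_mul_eq_zero_of_condExp_eq_zero hm hψ hψY
    (hYp.integrable (ENNReal.one_le_ofReal.mpr hr1)) hY
  have hXi := hXp.integrable_abs_rpow hr0
  have hYi := hYp.integrable_abs_rpow hr0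
  have hint : ∫ ω, |X ω + Y ω| ^ r ∂μ ≤ ∫ ω, |X ω| ^ r ∂μ + 2 * ∫ ω, |Y ω| ^ r ∂μ := calc
    ∫ ω, |X ω + Y ω| ^ r ∂μ
      ≤ ∫ ω, |X ω| ^ r + r * (ψ ω * Y ω) + 2 * |Y ω| ^ r ∂μ :=
        integral_mono ((hXp.add hYp).integrable_abs_rpow hr0)
          ((hXi.add (hψY.const_mul r)).add (hYi.const_mul 2))
          fun ω => abs_add_rpow_le hr1 hr2 (X ω) (Y ω)
    _ = ∫ ω, |X ω| ^ r ∂μ + r * ∫ ω, ψ ω * Y ω ∂μ + 2 * ∫ ω, |Y ω| ^ r ∂μ := by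
        rw [integral_add _ (hYi.const_mul 2), integral_add hXi (hψY.const_mul r),
          integral_const_mul, integral_const_mul]
        exact hXi.add (hψY.const_mul r)
    _ = ∫ ω, |X ω| ^ r ∂μ + 2 * ∫ ω, |Y ω| ^ r ∂μ := by rw [horth, mul_zero, add_zero]
  rw [(hXp.add hYp).eLpNorm_rpow_eq_integral hr0, hXp.eLpNorm_rpow_eq_integral hr0,
    hYp.eLpNorm_rpow_eq_integral hr0, ← ENNReal.ofReal_ofNat 2, ← ENNReal.ofReal_mul zero_le_two,
    ← ENNReal.ofReal_add (integral_nonneg fun _ => by positivity) (by positivity)]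
  exact ENNReal.ofReal_le_ofReal hint

theorem Martingale.eLpNorm_sub_rpow_le [IsFiniteMeasure μ] {ℱ : Filtration ℤ m0}
    {M : ℤ → Ω → ℝ} (hM : Martingale M ℱ μ) (hr1 : 1 ≤ r) (hr2 : r ≤ 2)
    (hMp : ∀ k, MemLp (M k) (ENNReal.ofReal r) μ) {j n : ℤ} (hjn : j ≤ n) :
    eLpNorm (M n - M j) (ENNReal.ofReal r) μ ^ r ≤
      2 * ∑ k ∈ Finset.Ioc j n, eLpNorm (M k - M (k - 1)) (ENNReal.ofReal r) μ ^ r := by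
  induction n, hjn using Int.leInduction with
  | base => simp [ENNReal.zero_rpow_of_pos (by linarith : (0 : ℝ) < r)]
  | succ n hjn ih =>
    have hinc : μ[M (n + 1) - M n|ℱ n] =ᵐ[μ] 0 := by
      filter_upwards [condExp_sub (hM.integrable (n + 1)) (hM.integrable n) (ℱ n),
        hM.condExp_ae_eq (Int.le_add_one (le_refl n))] with ω h1 h2
      simp [h1, h2, condExp_of_stronglyMeasurable (ℱ.le n) (hM.stronglyAdapted n)
        (hM.integrable n)]
    have hstep := eLpNorm_add_rpow_le_of_condExp_eq_zero hr1 hr2 (ℱ.le n)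
      ((hM.stronglyAdapted n).sub ((hM.stronglyAdapted j).mono (ℱ.mono hjn)))
      ((hMp n).sub (hMp j)) ((hMp (n + 1)).sub (hMp n)) hinc
    rw [sub_add_sub_cancel'] at hstep
    rw [← Finset.insert_Ioc_right_eq_Ioc_add_one hjn, Finset.sum_insert (by simp),
      add_sub_cancel_right, mul_add]
    exact hstep.trans ((add_le_add_left ih _).trans_eq (add_comm _ _))

theorem eLpNorm_le_of_tendsto_of_eLpNorm_sub_le {ι E : Type*} [NormedAddCommGroup E]
    {l : Filter ι} [l.NeBot] {p : ℝ≥0∞} (hp : 1 ≤ p) {f : Ω → E} {g : ι → Ω → E} {C : ℝ≥0∞}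
    (hf : AEStronglyMeasurable f μ) (hg : ∀ i, AEStronglyMeasurable (g i) μ)
    (hg0 : Tendsto (fun i => eLpNorm (g i) p μ) l (𝓝 0))
    (hC : ∀ᶠ i in l, eLpNorm (f - g i) p μ ≤ C) :
    eLpNorm f p μ ≤ C := by
  refine ge_of_tendsto (by simpa using hg0.const_add C) ?_
  filter_upwards [hC] with i hi
  calc eLpNorm f p μ = eLpNorm (f - g i + g i) p μ := by rw [sub_add_cancel]
    _ ≤ eLpNorm (f - g i) p μ + eLpNorm (g i) p μ := eLpNorm_add_le (hf.sub (hg i)) (hg i) hp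
    _ ≤ C + eLpNorm (g i) p μ := by gcongr

theorem eLpNorm_rpow_le_two_mul_tsum_condExp_sub [IsFiniteMeasure μ] (hr1 : 1 ≤ r)
    (hr2 : r ≤ 2) (ℱ : Filtration ℤ m0) {S : Ω → ℝ} {n : ℤ} (hSn : StronglyMeasurable[ℱ n] S)
    (hS : MemLp S (ENNReal.ofReal r) μ)
    (hpast : Tendsto (fun k => eLpNorm (μ[S|ℱ k]) (ENNReal.ofReal r) μ) atBot (𝓝 0)) :
    eLpNorm S (ENNReal.ofReal r) μ ^ r ≤
      2 * ∑' k : {k : ℤ // k ≤ n},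
        eLpNorm (μ[S|ℱ k] - μ[S|ℱ (k - 1)]) (ENNReal.ofReal r) μ ^ r := by
  have hr0 : 0 < r := by linarith
  have hp1 : 1 ≤ ENNReal.ofReal r := ENNReal.one_le_ofReal.mpr hr1
  set T := ∑' k : {k : ℤ // k ≤ n},
    eLpNorm (μ[S|ℱ k] - μ[S|ℱ (k - 1)]) (ENNReal.ofReal r) μ ^ r
  have hSn' : μ[S|ℱ n] = S := condExp_of_stronglyMeasurable (ℱ.le n) hSn (hS.integrable hp1)
  have hrem : ∀ j ≤ n, eLpNorm (S - μ[S|ℱ j]) (ENNReal.ofReal r) μ ≤ (2 * T) ^ r⁻¹ := by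
    intro j hj
    have hmart := (martingale_condExp S ℱ μ).eLpNorm_sub_rpow_le hr1 hr2
      (fun k => hS.condExp hp1) hj
    rw [hSn'] at hmart
    rw [ENNReal.le_rpow_inv_iff hr0]
    refine hmart.trans ?_
    gcongr
    rw [← Finset.sum_subtype_of_mem _ fun k hk => (Finset.mem_Ioc.mp hk).2]
    exact ENNReal.sum_le_tsum _
  rw [← ENNReal.le_rpow_inv_iff hr0]
  exact eLpNorm_le_of_tendsto_of_eLpNorm_sub_le hp1 hS.aestronglyMeasurable
    (fun _ => integrable_condExp.aestronglyMeasurable) hpast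
    ((eventually_le_atBot n).mono hrem)

section Sum

variable {E : Type*} [NormedAddCommGroup E] [NormedSpace ℝ E] [CompleteSpace E]

theorem eLpNorm_condExp_sub_condExp_sum_le {ℱ : Filtration ℤ m0} [SigmaFiniteFiltration μ ℱ]
    {Z : ℤ → Ω → E} {s : Finset ℤ} {p : ℝ≥0∞} (hp : 1 ≤ p)
    (hadapt : ∀ t ∈ s, StronglyMeasurable[ℱ t] (Z t)) (hint : ∀ t ∈ s, Integrable (Z t) μ) (k : ℤ) :
    eLpNorm (μ[∑ t ∈ s, Z t|ℱ k] - μ[∑ t ∈ s, Z t|ℱ (k - 1)]) p μ ≤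
      ∑ t ∈ s with k ≤ t, eLpNorm (μ[Z t|ℱ k] - μ[Z t|ℱ (k - 1)]) p μ := by
  have hvanish : ∀ t ∈ s, ¬k ≤ t → μ[Z t|ℱ k] - μ[Z t|ℱ (k - 1)] = 0 := fun t ht hkt => by
    have hZ := hadapt t ht
    rw [condExp_of_stronglyMeasurable (ℱ.le _) (hZ.mono (ℱ.mono (by omega))) (hint t ht),
      condExp_of_stronglyMeasurable (ℱ.le _) (hZ.mono (ℱ.mono (by omega))) (hint t ht), sub_self]
  have hsum : μ[∑ t ∈ s, Z t|ℱ k] - μ[∑ t ∈ s, Z t|ℱ (k - 1)] =ᵐ[μ]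
      ∑ t ∈ s with k ≤ t, (μ[Z t|ℱ k] - μ[Z t|ℱ (k - 1)]) := by
    rw [Finset.sum_filter_of_ne fun t ht hne => not_not.mp (mt (hvanish t ht) hne),
      Finset.sum_sub_distrib]
    exact (condExp_finsetSum hint _).sub (condExp_finsetSum hint _)
  rw [eLpNorm_congr_ae hsum]
  exact eLpNorm_sum_le (fun t _ => integrable_condExp.1.sub integrable_condExp.1) hp

theorem tendsto_eLpNorm_condExp_finsetSum {ι κ : Type*} {l : Filter ι}
    {ℱ : ι → MeasurableSpace Ω} {Z : κ → Ω → E} {s : Finset κ} {p : ℝ≥0∞} (hp : 1 ≤ p)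
    (hint : ∀ t ∈ s, Integrable (Z t) μ)
    (hZ : ∀ t ∈ s, Tendsto (fun i => eLpNorm (μ[Z t|ℱ i]) p μ) l (𝓝 0)) :
    Tendsto (fun i => eLpNorm (μ[∑ t ∈ s, Z t|ℱ i]) p μ) l (𝓝 0) := by
  have hbound : ∀ i, eLpNorm (μ[∑ t ∈ s, Z t|ℱ i]) p μ ≤ ∑ t ∈ s, eLpNorm (μ[Z t|ℱ i]) p μ :=
    fun i => by
      rw [eLpNorm_congr_ae (condExp_finsetSum hint _)]
      exact eLpNorm_sum_le (fun t _ => integrable_condExp.1) hp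
  refine tendsto_of_tendsto_of_tendsto_of_le_of_le tendsto_const_nhds ?_ (fun _ => bot_le)
    hbound
  simpa using tendsto_finsetSum s hZ

end Sum

end MeasureTheory

theorem martingale_projection_decomposition_bound_general
    {Ω : Type*} {m0 : MeasurableSpace Ω} (P : Measure Ω) [IsProbabilityMeasure P]
    (r : ℝ) (hr1 : 1 ≤ r) (hr2 : r ≤ 2)
    (ℱ : ℤ → MeasurableSpace Ω) (hmono : Monotone ℱ) (hle : ∀ k, ℱ k ≤ m0)
    (n : ℕ) (Z : ℤ → Ω → ℝ)
    (hadapt : ∀ t : ℤ, 1 ≤ t → t ≤ (n : ℤ) → StronglyMeasurable[ℱ t] (Z t))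
    (hLp : ∀ t : ℤ, 1 ≤ t → t ≤ (n : ℤ) → MemLp (Z t) (ENNReal.ofReal r) P)
    (hLrconv : ∀ t : ℤ, 1 ≤ t → t ≤ (n : ℤ) →
      Tendsto (fun ℓ : ℤ => eLpNorm (P[Z t|ℱ ℓ]) (ENNReal.ofReal r) P) atBot (nhds 0)) :
    ∫⁻ ω, (‖∑ t ∈ Finset.Icc (1 : ℤ) (n : ℤ), Z t ω‖₊ : ℝ≥0∞) ^ r ∂P ≤
      2 * ∑' k : {k : ℤ // k ≤ (n : ℤ)},
        (∑ t ∈ Finset.Icc (max k.1 1) (n : ℤ),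
          eLpNorm (fun ω => (P[Z t|ℱ k.1]) ω - (P[Z t|ℱ (k.1 - 1)]) ω)
            (ENNReal.ofReal r) P) ^ r := by
  have hp1 : 1 ≤ ENNReal.ofReal r := ENNReal.one_le_ofReal.mpr hr1
  let F : Filtration ℤ m0 := ⟨ℱ, hmono, hle⟩
  have hadapt' : ∀ t ∈ Finset.Icc (1 : ℤ) n, StronglyMeasurable[F t] (Z t) :=
    fun t ht => hadapt t (Finset.mem_Icc.mp ht).1 (Finset.mem_Icc.mp ht).2
  have hLp' : ∀ t ∈ Finset.Icc (1 : ℤ) n, MemLp (Z t) (ENNReal.ofReal r) P :=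
    fun t ht => hLp t (Finset.mem_Icc.mp ht).1 (Finset.mem_Icc.mp ht).2
  have hint : ∀ t ∈ Finset.Icc (1 : ℤ) n, Integrable (Z t) P :=
    fun t ht => (hLp' t ht).integrable hp1
  have hSn : StronglyMeasurable[F n] (∑ t ∈ Finset.Icc (1 : ℤ) n, Z t) :=
    Finset.stronglyMeasurable_sum _ fun t ht =>
      (hadapt' t ht).mono (F.mono (Finset.mem_Icc.mp ht).2)
  have hpast := tendsto_eLpNorm_condExp_finsetSum hp1 hint fun t ht =>
    hLrconv t (Finset.mem_Icc.mp ht).1 (Finset.mem_Icc.mp ht).2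
  have hwindow (k : ℤ) : {t ∈ Finset.Icc (1 : ℤ) n | k ≤ t} = Finset.Icc (max k 1) n := by
    ext t
    simp only [Finset.mem_filter, Finset.mem_Icc, max_le_iff]
    omega
  calc ∫⁻ ω, (‖∑ t ∈ Finset.Icc (1 : ℤ) n, Z t ω‖₊ : ℝ≥0∞) ^ r ∂P
      = eLpNorm (∑ t ∈ Finset.Icc (1 : ℤ) n, Z t) (ENNReal.ofReal r) P ^ r := by
        simp_rw [← Finset.sum_apply]
        exact lintegral_nnnorm_rpow_eq_eLpNorm_rpow (by linarith) _
    _ ≤ _ := eLpNorm_rpow_le_two_mul_tsum_condExp_sub hr1 hr2 F hSn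
        (memLp_finsetSum' _ hLp') hpast
    _ ≤ _ := by
        gcongr with k
        rw [← hwindow]
        exact eLpNorm_condExp_sub_condExp_sum_le hp1 hadapt' hint k

/-- Martingale-projection decomposition bound (Lemma C.3 of the paper): for an adapted
centered family `(Z_t)_{1 ≤ t ≤ n}` in `L^r(P)`, `r ∈ [1,2]`, whose conditional expectations
vanish in the remote past, `E|∑_{t=1}^n Z_t|^r ≤ 2 ∑_{k ≤ n} (∑_{t=max(k,1)}^n ‖P_k Z_t‖_r)^r`
where `P_k Y = E[Y|ℱ_k] - E[Y|ℱ_{k-1}]`. -/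
theorem martingale_projection_decomposition_bound
    {Ω : Type*} {m0 : MeasurableSpace Ω} (P : Measure Ω) [IsProbabilityMeasure P]
    (r : ℝ) (hr1 : 1 ≤ r) (hr2 : r ≤ 2)
    (ℱ : ℤ → MeasurableSpace Ω) (hmono : Monotone ℱ) (hle : ∀ k, ℱ k ≤ m0)
    (n : ℕ) (Z : ℤ → Ω → ℝ)
    (hadapt : ∀ t : ℤ, 1 ≤ t → t ≤ (n : ℤ) → StronglyMeasurable[ℱ t] (Z t))
    (hLp : ∀ t : ℤ, 1 ≤ t → t ≤ (n : ℤ) → MemLp (Z t) (ENNReal.ofReal r) P)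
    (hcent : ∀ t : ℤ, 1 ≤ t → t ≤ (n : ℤ) → ∫ ω, Z t ω ∂P = 0)
    (hasconv : ∀ t : ℤ, 1 ≤ t → t ≤ (n : ℤ) →
      ∀ᵐ ω ∂P, Tendsto (fun ℓ : ℤ => (P[Z t|ℱ ℓ]) ω) atBot (nhds 0))
    (hLrconv : ∀ t : ℤ, 1 ≤ t → t ≤ (n : ℤ) →
      Tendsto (fun ℓ : ℤ => eLpNorm (P[Z t|ℱ ℓ]) (ENNReal.ofReal r) P) atBot (nhds 0)) :
    ∫⁻ ω, (‖∑ t ∈ Finset.Icc (1 : ℤ) (n : ℤ), Z t ω‖₊ : ℝ≥0∞) ^ r ∂P ≤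
      2 * ∑' k : {k : ℤ // k ≤ (n : ℤ)},
        (∑ t ∈ Finset.Icc (max k.1 1) (n : ℤ),
          eLpNorm (fun ω => (P[Z t|ℱ k.1]) ω - (P[Z t|ℱ (k.1 - 1)]) ω)
            (ENNReal.ofReal r) P) ^ r :=
  martingale_projection_decomposition_bound_general P r hr1 hr2 ℱ hmono hle n Z hadapt hLp hLrconv
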